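/- arXiv:1305.0363 — 2 statements merged into one kernel-verified Lean document; each statement's English description precedes it below -/
import Mathlib

section
/- Let G and H be nontrivial connected graphs of orders n1, n2 with t1, t2 true twin equivalence classes. If dim(G) = n1 − t1 and dim(H) = n2 − t2, then dim(G ⊠ H) = n1·n2 − t1·t2. -/
/-!
Two true twins are at the same distance from every third vertex, so the complement of a metric
generator meets each true-twin class at most once: `n - ti ≤ dim` for every connected graph.
Closed neighbourhoods in `G ⊠ H` are products of closed neighbourhoods, so `ti(G ⊠ H) ≤ t₁ t₂`,
which gives the lower bound. Conversely, `d_{G ⊠ H} = max (d_G, d_H)` makes the complement of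
`W₁ × W₂` a metric generator of `G ⊠ H` whenever `W₁ᶜ`, `W₂ᶜ` are metric generators of `G`, `H`;
taking the complements of metric bases, of sizes `t₁` and `t₂`, gives the upper bound.
-/

open SimpleGraph

/-- The strong product of two simple graphs. -/
def strongProd {α β : Type*} (G : SimpleGraph α) (H : SimpleGraph β) :
    SimpleGraph (α × β) where
  Adj x y := x ≠ y ∧ (x.1 = y.1 ∨ G.Adj x.1 y.1) ∧ (x.2 = y.2 ∨ H.Adj x.2 y.2)
  symm := by
    constructor
    rintro ⟨a, b⟩ ⟨c, d⟩ ⟨hne, h1, h2⟩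
    refine ⟨hne.symm, ?_, ?_⟩
    · rcases h1 with h | h
      · exact Or.inl h.symm
      · exact Or.inr h.symm
    · rcases h2 with h | h
      · exact Or.inl h.symm
      · exact Or.inr h.symm
  loopless := by constructor; rintro ⟨a, b⟩ ⟨hne, -, -⟩; exact hne rfl

/-- A set `S` is a metric generator for `G` if every pair of distinct vertices is
distinguished by some element of `S`. -/
def IsMetricGen {α : Type*} (G : SimpleGraph α) (S : Set α) : Prop :=
  ∀ x y : α, x ≠ y → ∃ s ∈ S, G.dist x s ≠ G.dist y s

/-- The metric dimension of a graph: minimum cardinality of a metric generator. -/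
noncomputable def metricDim {α : Type*} (G : SimpleGraph α) : ℕ :=
  sInf {n | ∃ S : Set α, IsMetricGen G S ∧ S.ncard = n}

/-- `G` is self `k`-resolved if for all distinct `x, y` there is `w` such that
`d(y,w) ≥ k` and `x` lies on a shortest `y`–`w` path, or symmetrically. -/
def SelfResolved {α : Type*} (G : SimpleGraph α) (k : ℕ) : Prop :=
  ∀ x y : α, x ≠ y → ∃ w : α,
    (k ≤ G.dist y w ∧ G.dist y x + G.dist x w = G.dist y w) ∨
    (k ≤ G.dist x w ∧ G.dist x y + G.dist y w = G.dist x w)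

/-- Two vertices are true twins if their closed neighborhoods coincide. -/
def TrueTwins {α : Type*} (G : SimpleGraph α) (u v : α) : Prop :=
  insert u (G.neighborSet u) = insert v (G.neighborSet v)

/-- The number of equivalence classes of the true twin relation. -/
noncomputable def numTrueTwinClasses {α : Type*} (G : SimpleGraph α) : ℕ :=
  Nat.card (Quotient (Setoid.ker (fun v => insert v (G.neighborSet v))))

section

variable {α β : Type*} {G : SimpleGraph α} {H : SimpleGraph β}

theorem TrueTwins.reachable {u v : α} (h : TrueTwins G u v) : G.Reachable u v := by
  have hu : u ∈ insert v (G.neighborSet v) := h ▸ Set.mem_insert u _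
  rcases hu with rfl | hadj
  · rfl
  · exact hadj.symm.reachable

/-- The first step of a shortest walk from `u` to `s` leaves `u` into `N[u] = N[v]`. -/
theorem TrueTwins.dist_le {u v s : α} (h : TrueTwins G u v) (hsu : s ≠ u) :
    G.dist v s ≤ G.dist u s := by
  by_cases hr : G.Reachable u s
  · obtain ⟨p, hp⟩ := hr.exists_walk_length_eq_dist
    cases p with
    | nil => exact absurd rfl hsu
    | @cons _ x _ hux q =>
      have hx : x ∈ insert v (G.neighborSet v) := h ▸ Set.mem_insert_of_mem u hux
      rw [Walk.length_cons] at hp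
      rcases hx with rfl | hvx
      · exact hp ▸ (SimpleGraph.dist_le q).trans (Nat.le_succ _)
      · exact hp ▸ SimpleGraph.dist_le (Walk.cons hvx q)
  · have hvs : ¬G.Reachable v s := fun hvs => hr (h.reachable.trans hvs)
    rw [dist_eq_zero_of_not_reachable hvs]
    exact Nat.zero_le _

theorem TrueTwins.dist_eq {u v s : α} (h : TrueTwins G u v) (hsu : s ≠ u) (hsv : s ≠ v) :
    G.dist u s = G.dist v s :=
  le_antisymm (TrueTwins.dist_le h.symm hsv) (h.dist_le hsu)

theorem IsMetricGen.eq_of_trueTwins {S : Set α} (hS : IsMetricGen G S) {u v : α} (hu : u ∉ S)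
    (hv : v ∉ S) (h : TrueTwins G u v) : u = v := by
  by_contra huv
  obtain ⟨s, hs, hd⟩ := hS u v huv
  exact hd (h.dist_eq (fun hsu => hu (hsu ▸ hs)) (fun hsv => hv (hsv ▸ hs)))

theorem IsMetricGen.ncard_compl_le [Finite α] {S : Set α} (hS : IsMetricGen G S) :
    Sᶜ.ncard ≤ numTrueTwinClasses G := by
  have hinj : Function.Injective
      (fun w : ↥Sᶜ => Quotient.mk (Setoid.ker (fun v => insert v (G.neighborSet v))) w.1) :=
    fun w w' h => Subtype.ext (hS.eq_of_trueTwins w.2 w'.2 (Quotient.exact h))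
  simpa only [numTrueTwinClasses, Nat.card_coe_set_eq] using Nat.card_le_card_of_injective _ hinj

theorem numTrueTwinClasses_le_card [Finite α] (G : SimpleGraph α) :
    numTrueTwinClasses G ≤ Nat.card α :=
  Nat.card_le_card_of_surjective _ Quotient.mk_surjective

theorem isMetricGen_univ (hG : G.Connected) : IsMetricGen G Set.univ := fun x y hxy =>
  ⟨x, Set.mem_univ x, by rw [dist_self]; exact (hG.pos_dist_of_ne hxy.symm).ne⟩

theorem metricDim_le {S : Set α} (hS : IsMetricGen G S) : metricDim G ≤ S.ncard :=
  Nat.sInf_le ⟨S, hS, rfl⟩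

theorem exists_isMetricGen_ncard_eq_metricDim (hG : G.Connected) :
    ∃ S, IsMetricGen G S ∧ S.ncard = metricDim G :=
  Nat.sInf_mem (s := {n | ∃ S, IsMetricGen G S ∧ S.ncard = n}) ⟨_, Set.univ, isMetricGen_univ hG, rfl⟩

theorem card_sub_numTrueTwinClasses_le_metricDim [Finite α] (hG : G.Connected) :
    Nat.card α - numTrueTwinClasses G ≤ metricDim G := by
  obtain ⟨S, hS, hcard⟩ := exists_isMetricGen_ncard_eq_metricDim hG
  have := Set.ncard_add_ncard_compl S
  have := hS.ncard_compl_le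
  omega

theorem strongProd_closedNbhd (G : SimpleGraph α) (H : SimpleGraph β) (x : α × β) :
    insert x ((strongProd G H).neighborSet x) =
      insert x.1 (G.neighborSet x.1) ×ˢ insert x.2 (H.neighborSet x.2) := by
  ext y
  simp only [Set.mem_insert_iff, mem_neighborSet, Set.mem_prod, strongProd, ne_eq]
  constructor
  · rintro (rfl | ⟨-, h1, h2⟩)
    · exact ⟨Or.inl rfl, Or.inl rfl⟩
    · exact ⟨h1.imp_left Eq.symm, h2.imp_left Eq.symm⟩
  · rintro ⟨h1, h2⟩
    by_cases hyx : y = x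
    · exact Or.inl hyx
    · exact Or.inr ⟨Ne.symm hyx, h1.imp_left Eq.symm, h2.imp_left Eq.symm⟩

theorem TrueTwins.strongProd {a a' : α} {b b' : β} (ha : TrueTwins G a a')
    (hb : TrueTwins H b b') : TrueTwins (strongProd G H) (a, b) (a', b') := by
  unfold TrueTwins
  rw [strongProd_closedNbhd, strongProd_closedNbhd, ha, hb]

theorem numTrueTwinClasses_strongProd_le [Finite α] [Finite β] (G : SimpleGraph α)
    (H : SimpleGraph β) :
    numTrueTwinClasses (strongProd G H) ≤ numTrueTwinClasses G * numTrueTwinClasses H := by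
  let f : Quotient (Setoid.ker (fun v => insert v (G.neighborSet v))) →
      Quotient (Setoid.ker (fun v => insert v (H.neighborSet v))) →
      Quotient (Setoid.ker (fun v => insert v ((strongProd G H).neighborSet v))) :=
    Quotient.map₂ Prod.mk fun _ _ ha _ _ hb => TrueTwins.strongProd ha hb
  have hf : Function.Surjective (Function.uncurry f) := by
    rintro ⟨x⟩
    exact ⟨(Quotient.mk _ x.1, Quotient.mk _ x.2), rfl⟩
  simpa only [numTrueTwinClasses, Nat.card_prod] using Nat.card_le_card_of_surjective _ hf

theorem SimpleGraph.Connected.exists_adj_or_eq_dist_le (hG : G.Connected) {a c : α} {n : ℕ}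
    (h : G.dist a c ≤ n + 1) : ∃ a', (a = a' ∨ G.Adj a a') ∧ G.dist a' c ≤ n := by
  by_cases hn : G.dist a c ≤ n
  · exact ⟨a, Or.inl rfl, hn⟩
  obtain ⟨p, hp⟩ := (hG a c).exists_walk_length_eq_dist
  cases p with
  | nil => simp at hn
  | @cons _ a' _ hadj q =>
    rw [Walk.length_cons] at hp
    exact ⟨a', Or.inr hadj, by have := SimpleGraph.dist_le q; omega⟩

theorem exists_strongProd_walk_length_le (hG : G.Connected) (hH : H.Connected) (n : ℕ) :
    ∀ {a c : α} {b d : β}, G.dist a c ≤ n → H.dist b d ≤ n →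
      ∃ w : (strongProd G H).Walk (a, b) (c, d), w.length ≤ n := by
  induction n with
  | zero =>
    intro a c b d hac hbd
    rw [Nat.le_zero, hG.dist_eq_zero_iff] at hac
    rw [Nat.le_zero, hH.dist_eq_zero_iff] at hbd
    subst hac hbd
    exact ⟨Walk.nil, le_rfl⟩
  | succ n ih =>
    intro a c b d hac hbd
    obtain ⟨a', ha', hac'⟩ := hG.exists_adj_or_eq_dist_le hac
    obtain ⟨b', hb', hbd'⟩ := hH.exists_adj_or_eq_dist_le hbd
    obtain ⟨w, hw⟩ := ih hac' hbd'
    by_cases hstay : (a, b) = (a', b')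
    · exact ⟨w.copy hstay.symm rfl, by rw [Walk.length_copy]; omega⟩
    · have hadj : (strongProd G H).Adj (a, b) (a', b') := ⟨hstay, ha', hb'⟩
      exact ⟨Walk.cons hadj w, Nat.succ_le_succ hw⟩

theorem exists_walk_length_le_of_adj_or_eq {f : α → β}
    (hf : ∀ {x y}, G.Adj x y → f x = f y ∨ H.Adj (f x) (f y)) {x y : α} (p : G.Walk x y) :
    ∃ q : H.Walk (f x) (f y), q.length ≤ p.length := by
  induction p with
  | nil => exact ⟨Walk.nil, le_rfl⟩
  | cons hxy _ ih =>
    obtain ⟨q, hq⟩ := ih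
    rw [Walk.length_cons]
    rcases hf hxy with heq | hadj
    · exact ⟨q.copy heq.symm rfl, by rw [Walk.length_copy]; omega⟩
    · exact ⟨Walk.cons hadj q, by rw [Walk.length_cons]; omega⟩

theorem strongProd_reachable (hG : G.Connected) (hH : H.Connected) (x y : α × β) :
    (strongProd G H).Reachable x y :=
  let ⟨w, _⟩ := exists_strongProd_walk_length_le hG hH _ (le_max_left (G.dist x.1 y.1) _)
    (le_max_right _ (H.dist x.2 y.2))
  w.reachable

theorem strongProd_connected (hG : G.Connected) (hH : H.Connected) :
    (strongProd G H).Connected :=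
  have : Nonempty α := hG.nonempty
  have : Nonempty β := hH.nonempty
  Connected.mk (strongProd_reachable hG hH)

theorem strongProd_dist (hG : G.Connected) (hH : H.Connected) (x y : α × β) :
    (strongProd G H).dist x y = max (G.dist x.1 y.1) (H.dist x.2 y.2) := by
  apply le_antisymm
  · obtain ⟨w, hw⟩ := exists_strongProd_walk_length_le hG hH _ (le_max_left (G.dist x.1 y.1) _)
      (le_max_right _ (H.dist x.2 y.2))
    exact (SimpleGraph.dist_le w).trans hw
  · obtain ⟨p, hp⟩ := (strongProd_reachable hG hH x y).exists_walk_length_eq_dist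
    obtain ⟨p₁, hp₁⟩ := exists_walk_length_le_of_adj_or_eq (H := G) (f := Prod.fst)
      (fun h : (strongProd G H).Adj _ _ => h.2.1) p
    obtain ⟨p₂, hp₂⟩ := exists_walk_length_le_of_adj_or_eq (f := Prod.snd)
      (fun h : (strongProd G H).Adj _ _ => h.2.2) p
    rw [← hp]
    exact max_le ((SimpleGraph.dist_le p₁).trans hp₁) ((SimpleGraph.dist_le p₂).trans hp₂)

/-- If `s ∈ S` resolves `a ≠ c`, say `d(a, s) < d(c, s)`, then `(s, b)` resolves `(a, b)` and
`(c, d)`, since `d((c, d), (s, b)) ≥ d(c, s)`; pairs with `a = c` are resolved in the same way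
through `T`. -/
theorem IsMetricGen.strongProd (hG : G.Connected) (hH : H.Connected) {S : Set α} {T : Set β}
    (hS : IsMetricGen G S) (hT : IsMetricGen H T) :
    IsMetricGen (strongProd G H) (Sᶜ ×ˢ Tᶜ)ᶜ := by
  rintro ⟨a, b⟩ ⟨c, d⟩ hne
  simp only [strongProd_dist hG hH, Set.mem_compl_iff, Set.mem_prod, not_and_or, not_not]
  by_cases hac : a = c
  · subst hac
    obtain ⟨t, ht, hbd⟩ := hT b d fun hbd => hne (hbd ▸ rfl)
    exact ⟨(a, t), Or.inr ht, by simpa using hbd⟩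
  · obtain ⟨s, hs, hacs⟩ := hS a c hac
    rcases hacs.lt_or_gt with hlt | hlt
    · exact ⟨(s, b), Or.inl hs, by simp only [dist_self, max_eq_left (Nat.zero_le _)]; omega⟩
    · exact ⟨(s, d), Or.inl hs, by simp only [dist_self, max_eq_left (Nat.zero_le _)]; omega⟩

theorem metricDim_strongProd_le [Finite α] [Finite β] (hG : G.Connected) (hH : H.Connected) :
    metricDim (strongProd G H) ≤
      Nat.card α * Nat.card β - (Nat.card α - metricDim G) * (Nat.card β - metricDim H) := by
  obtain ⟨S, hS, hScard⟩ := exists_isMetricGen_ncard_eq_metricDim hG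
  obtain ⟨T, hT, hTcard⟩ := exists_isMetricGen_ncard_eq_metricDim hH
  calc metricDim (strongProd G H) ≤ ((Sᶜ ×ˢ Tᶜ)ᶜ).ncard := metricDim_le (hS.strongProd hG hH hT)
    _ = _ := by rw [Set.ncard_compl, Nat.card_prod, Set.ncard_prod, Set.ncard_compl,
      Set.ncard_compl, hScard, hTcard]

end

theorem stmt_10_general {α β : Type*} [Fintype α] [Fintype β]
    (G : SimpleGraph α) (H : SimpleGraph β) (hG : G.Connected) (hH : H.Connected)
    (hdG : metricDim G = Fintype.card α - numTrueTwinClasses G)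
    (hdH : metricDim H = Fintype.card β - numTrueTwinClasses H) :
    metricDim (strongProd G H) =
      Fintype.card α * Fintype.card β - numTrueTwinClasses G * numTrueTwinClasses H := by
  simp only [← Nat.card_eq_fintype_card] at hdG hdH ⊢
  apply le_antisymm
  · calc metricDim (strongProd G H)
        ≤ Nat.card α * Nat.card β - (Nat.card α - metricDim G) * (Nat.card β - metricDim H) :=
          metricDim_strongProd_le hG hH
      _ = _ := by
        rw [hdG, hdH, Nat.sub_sub_self (numTrueTwinClasses_le_card G),
          Nat.sub_sub_self (numTrueTwinClasses_le_card H)]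
  · calc Nat.card α * Nat.card β - numTrueTwinClasses G * numTrueTwinClasses H
        ≤ Nat.card (α × β) - numTrueTwinClasses (strongProd G H) := by
          rw [Nat.card_prod]; exact Nat.sub_le_sub_left (numTrueTwinClasses_strongProd_le G H) _
      _ ≤ metricDim (strongProd G H) :=
          card_sub_numTrueTwinClasses_le_metricDim (strongProd_connected hG hH)

theorem stmt_10 {α β : Type*} [Fintype α] [Fintype β] [Nontrivial α] [Nontrivial β]
    (G : SimpleGraph α) (H : SimpleGraph β) (hG : G.Connected) (hH : H.Connected)
    (hdG : metricDim G = Fintype.card α - numTrueTwinClasses G)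
    (hdH : metricDim H = Fintype.card β - numTrueTwinClasses H) :
    metricDim (strongProd G H) =
      Fintype.card α * Fintype.card β - numTrueTwinClasses G * numTrueTwinClasses H :=
  stmt_10_general G H hG hH hdG hdH
end

section
/- For integers 2 ≤ n1 < n2, ⌊(n1+n2−2)/(n1−1)⌋ ≤ dim(P_{n1} ⊠ P_{n2}) ≤ ⌈(n1+n2−2)/(n1−1)⌉. -/
open SimpleGraph

/-!
With `a = n₁ - 1` and `b = n₂ - 1` the graph is the grid `[0, a] × [0, b]` with the `ℓ∞`
distance.

Lower bound: in each row `y` the pairs `(0, y), (1, y)` and `(a - 1, y), (a, y)` must be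
resolved. A landmark `z` resolves the first pair only in rows with `|y - z₂| < max z₁ 1` and the
second only in rows with `|y - z₂| < max (a - z₁) 1`, so it serves at most `2a` of the
`2(b + 1)` pairs, whence `b + 1 ≤ a · |S|`.

Upper bound: the `⌈b / a⌉ + 1` landmarks `(0, 0), (a, a), (0, 2a), (a, 3a), …`, with rows capped
at `b`, resolve the grid. Consecutive landmarks lie on opposite sides at most `a` rows apart, which
separates the points of any row between them. Points in rows `y < y'` are separated by the
landmark starting the band of `y` unless `y'` lies in that band too; then the two landmarks on one
side enclosing the band force `x = x'`, and within one column `(0, 0)` and `(a, a)` separate them.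
-/

namespace SimpleGraph

variable {V : Type*} {G : SimpleGraph V}

theorem dist_eq_of_adj_le_of_exists_adj_lt (f : V → V → ℕ) (hself : ∀ v, f v v = 0)
    (hadj : ∀ u w v, G.Adj u w → f u v ≤ f w v + 1)
    (hdescent : ∀ u v, u ≠ v → ∃ w, G.Adj u w ∧ f w v < f u v) (u v : V) :
    G.dist u v = f u v := by
  have le_length : ∀ {u : V} (p : G.Walk u v), f u v ≤ p.length := by
    intro u p
    induction p with
    | nil => simp [hself]
    | cons h p ih => rw [Walk.length_cons]; exact (hadj _ _ _ h).trans (by omega)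
  have exists_walk : ∀ n (u : V), f u v = n → ∃ p : G.Walk u v, p.length ≤ n := by
    intro n
    induction n using Nat.strong_induction_on with
    | _ n ih =>
      intro u hu
      by_cases huv : u = v
      · subst huv
        exact ⟨.nil, by simp⟩
      obtain ⟨w, hw, hlt⟩ := hdescent u v huv
      obtain ⟨p, hp⟩ := ih _ (hu ▸ hlt) w rfl
      exact ⟨.cons hw p, by rw [Walk.length_cons]; omega⟩
  obtain ⟨p, hp⟩ := exists_walk _ u rfl
  obtain ⟨q, hq⟩ := p.reachable.exists_walk_length_eq_dist
  exact le_antisymm ((dist_le p).trans hp) (hq ▸ le_length q)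

theorem eq_or_pathGraph_adj_iff {n : ℕ} {i j : Fin n} :
    (i = j ∨ (pathGraph n).Adj i j) ↔ Nat.dist i j ≤ 1 := by
  rw [pathGraph_adj, Fin.ext_iff, Nat.dist]
  omega

theorem strongProd_pathGraph_adj {m n : ℕ} {u v : Fin m × Fin n} :
    (strongProd (pathGraph m) (pathGraph n)).Adj u v ↔
      u ≠ v ∧ Nat.dist u.1 v.1 ≤ 1 ∧ Nat.dist u.2 v.2 ≤ 1 :=
  and_congr_right fun _ => and_congr eq_or_pathGraph_adj_iff eq_or_pathGraph_adj_iff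

end SimpleGraph

open Finset

theorem Fin.exists_dist_le_one_and_dist_eq_sub_one {n : ℕ} (i j : Fin n) :
    ∃ k : Fin n, Nat.dist i k ≤ 1 ∧ Nat.dist k j = Nat.dist i j - 1 := by
  rcases lt_trichotomy (i : ℕ) j with h | h | h
  · exact ⟨⟨i + 1, by omega⟩, by simp only [Nat.dist]; omega⟩
  · exact ⟨i, by simp only [Nat.dist]; omega⟩
  · exact ⟨⟨i - 1, by omega⟩, by simp only [Nat.dist]; omega⟩

def chebDist (u v : ℕ × ℕ) : ℕ := max (Nat.dist u.1 v.1) (Nat.dist u.2 v.2)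

theorem strongProd_pathGraph_dist {m n : ℕ} (u v : Fin m × Fin n) :
    (strongProd (pathGraph m) (pathGraph n)).dist u v =
      chebDist (Prod.map Fin.val Fin.val u) (Prod.map Fin.val Fin.val v) := by
  refine dist_eq_of_adj_le_of_exists_adj_lt (G := strongProd (pathGraph m) (pathGraph n))
    (fun u v => chebDist (Prod.map Fin.val Fin.val u) (Prod.map Fin.val Fin.val v))
    (fun v => by simp [chebDist]) ?_ ?_ u v
  · intro u w v huw
    have h₁ := Nat.dist.triangle_inequality u.1 w.1 v.1
    have h₂ := Nat.dist.triangle_inequality u.2 w.2 v.2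
    rw [strongProd_pathGraph_adj] at huw
    simp only [chebDist, Prod.map_fst, Prod.map_snd]
    omega
  · intro u v huv
    obtain ⟨x, hx₁, hx₂⟩ := Fin.exists_dist_le_one_and_dist_eq_sub_one u.1 v.1
    obtain ⟨y, hy₁, hy₂⟩ := Fin.exists_dist_le_one_and_dist_eq_sub_one u.2 v.2
    have hpos : 0 < Nat.dist u.1 v.1 ∨ 0 < Nat.dist u.2 v.2 := by
      by_contra! h
      exact huv (Prod.ext (Fin.ext (Nat.eq_of_dist_eq_zero (by omega)))
        (Fin.ext (Nat.eq_of_dist_eq_zero (by omega))))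
    have hlt : chebDist (x, y) (Prod.map Fin.val Fin.val v) <
        chebDist (Prod.map Fin.val Fin.val u) (Prod.map Fin.val Fin.val v) := by
      simp only [chebDist, Prod.map_fst, Prod.map_snd]
      omega
    refine ⟨(x, y), strongProd_pathGraph_adj.2 ⟨fun h => ?_, hx₁, hy₁⟩, hlt⟩
    subst h
    exact lt_irrefl _ hlt

theorem metricDim_le_ncard {α : Type*} {G : SimpleGraph α} {S : Set α} (hS : IsMetricGen G S) :
    metricDim G ≤ S.ncard :=
  Nat.sInf_le ⟨S, hS, rfl⟩

theorem le_metricDim {α : Type*} {G : SimpleGraph α} {k : ℕ} (hG : ∃ S, IsMetricGen G S)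
    (h : ∀ S, IsMetricGen G S → k ≤ S.ncard) : k ≤ metricDim G := by
  obtain ⟨S, hS⟩ := hG
  exact le_csInf ⟨_, S, hS, rfl⟩ fun _ ⟨S, hS, hk⟩ => hk ▸ h S hS

theorem dist_lt_of_chebDist_zero_ne_one {y : ℕ} {z : ℕ × ℕ}
    (h : chebDist (0, y) z ≠ chebDist (1, y) z) : Nat.dist y z.2 < max z.1 1 := by
  simp only [chebDist, Nat.dist] at *
  omega

theorem dist_lt_of_chebDist_pred_ne {a y : ℕ} {z : ℕ × ℕ} (hz : z.1 ≤ a)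
    (h : chebDist (a - 1, y) z ≠ chebDist (a, y) z) : Nat.dist y z.2 < max (a - z.1) 1 := by
  simp only [chebDist, Nat.dist] at *
  omega

theorem Fin.card_filter_dist_lt_le (n c r : ℕ) :
    #{y : Fin n | Nat.dist y c < r} ≤ 2 * r - 1 := by
  calc #{y : Fin n | Nat.dist y c < r}
      ≤ #(Icc (c + 1 - r) (c + r - 1)) := by
        refine card_le_card_of_injOn Fin.val (fun y hy => ?_) Fin.val_injective.injOn
        simp only [coe_filter, mem_univ, true_and, Set.mem_ofPred_eq, coe_Icc, Set.mem_Icc] at hy ⊢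
        rw [Nat.dist] at hy
        omega
    _ ≤ 2 * r - 1 := by rw [Nat.card_Icc]; omega

theorem card_le_sum_card_filter_of_forall_exists {ι α : Type*} [Fintype α] [DecidableEq α]
    (S : Finset ι) (P : ι → α → Prop) [∀ z, DecidablePred (P z)] (h : ∀ y, ∃ z ∈ S, P z y) :
    Fintype.card α ≤ ∑ z ∈ S, #{y | P z y} :=
  calc Fintype.card α = #(univ : Finset α) := card_univ.symm
    _ ≤ #(S.biUnion fun z => {y | P z y}) := card_le_card fun y _ => by simpa using h y
    _ ≤ _ := card_biUnion_le

theorem le_mul_ncard_of_isMetricGen {m n : ℕ} (hm : 2 ≤ m) {S : Set (Fin m × Fin n)}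
    (hS : IsMetricGen (strongProd (pathGraph m) (pathGraph n)) S) : n ≤ (m - 1) * S.ncard := by
  classical
  obtain ⟨S, rfl⟩ := S.toFinite.exists_finset_coe
  rw [Set.ncard_coe_finset]
  have resolve : ∀ (x x' : Fin m) (y : Fin n), x ≠ x' → ∃ z ∈ S,
      chebDist (x, y) (Prod.map Fin.val Fin.val z) ≠
        chebDist (x', y) (Prod.map Fin.val Fin.val z) :=
    fun x x' y hxx' => by
      obtain ⟨z, hz, hne⟩ := hS (x, y) (x', y) (by simpa using hxx')
      simp only [strongProd_pathGraph_dist] at hne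
      exact ⟨z, hz, hne⟩
  have hleft := card_le_sum_card_filter_of_forall_exists S
      (fun z (y : Fin n) => Nat.dist y z.2 < max (z.1 : ℕ) 1) fun y => by
    obtain ⟨z, hz, hne⟩ := resolve ⟨0, by omega⟩ ⟨1, by omega⟩ y (Fin.ne_of_val_ne zero_ne_one)
    exact ⟨z, hz, dist_lt_of_chebDist_zero_ne_one hne⟩
  have hright := card_le_sum_card_filter_of_forall_exists S
      (fun z (y : Fin n) => Nat.dist y z.2 < max (m - 1 - (z.1 : ℕ)) 1) fun y => by
    obtain ⟨z, hz, hne⟩ := resolve ⟨m - 1 - 1, by omega⟩ ⟨m - 1, by omega⟩ y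
      (Fin.ne_of_val_ne (show m - 1 - 1 ≠ m - 1 by omega))
    exact ⟨z, hz, dist_lt_of_chebDist_pred_ne (Nat.le_sub_one_of_lt z.1.isLt) hne⟩
  have per_landmark : ∀ z ∈ S, #{y : Fin n | Nat.dist y z.2 < max (z.1 : ℕ) 1} +
      #{y : Fin n | Nat.dist y z.2 < max (m - 1 - (z.1 : ℕ)) 1} ≤ 2 * (m - 1) := fun z _ => by
    have := Fin.card_filter_dist_lt_le n z.2 (max (z.1 : ℕ) 1)
    have := Fin.card_filter_dist_lt_le n z.2 (max (m - 1 - (z.1 : ℕ)) 1)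
    have := z.1.isLt
    omega
  have hsum := sum_le_card_nsmul S _ _ per_landmark
  rw [sum_add_distrib, smul_eq_mul] at hsum
  rw [Fintype.card_fin] at hleft hright
  nlinarith

section UpperBound

variable {a b : ℕ}

def landmark (a b l : ℕ) : ℕ × ℕ := (if Even l then 0 else a, min (l * a) b)

theorem landmark_zero : landmark a b 0 = (0, 0) := by
  simp [landmark]

theorem landmark_one (hab : a ≤ b) : landmark a b 1 = (a, a) := by
  simp [landmark, hab]

theorem landmark_fst_cases (b l : ℕ) :
    (landmark a b l).1 = 0 ∧ (landmark a b (l + 1)).1 = a ∨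
      (landmark a b l).1 = a ∧ (landmark a b (l + 1)).1 = 0 := by
  by_cases h : Even l <;> simp [landmark, h, Nat.even_add_one]

theorem landmark_fst_eq_zero_or_eq (b l : ℕ) :
    (landmark a b l).1 = 0 ∨ (landmark a b l).1 = a := by
  by_cases h : Even l <;> simp [landmark, h]

theorem landmark_fst_le (b l : ℕ) : (landmark a b l).1 ≤ a := by
  rcases landmark_fst_eq_zero_or_eq (a := a) b l with h | h <;> omega

theorem landmark_snd_le (a l : ℕ) : (landmark a b l).2 ≤ b := min_le_right _ _

theorem landmark_fst_add_two (l : ℕ) : (landmark a b (l + 2)).1 = (landmark a b l).1 := by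
  simp [landmark, Nat.even_add]

theorem landmark_snd_succ (l : ℕ) :
    (landmark a b (l + 1)).2 = min ((landmark a b l).2 + a) b := by
  simp only [landmark, add_one_mul]
  omega

theorem landmark_snd_mono {l l' : ℕ} (h : l ≤ l') : (landmark a b l).2 ≤ (landmark a b l').2 :=
  min_le_min_right b (Nat.mul_le_mul_right a h)

theorem landmark_snd_ceilDiv (ha : 0 < a) : (landmark a b (b ⌈/⌉ a)).2 = b :=
  min_eq_right (by rw [mul_comm]; exact le_smul_ceilDiv ha)

theorem exists_landmark_snd_le_le (ha : 0 < a) (hb : 0 < b) {y : ℕ} (hy : y ≤ b) :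
    ∃ i < b ⌈/⌉ a, (landmark a b i).2 ≤ y ∧ y ≤ (landmark a b (i + 1)).2 := by
  have hq : 0 < b ⌈/⌉ a := Nat.pos_of_ne_zero fun h => by
    have := (ceilDiv_le_iff_le_mul ha).1 h.le
    omega
  have hlast : y ≤ (landmark a b (b ⌈/⌉ a - 1 + 1)).2 := by
    rwa [Nat.sub_add_cancel hq, landmark_snd_ceilDiv ha]
  have hex : ∃ i, y ≤ (landmark a b (i + 1)).2 := ⟨_, hlast⟩
  refine ⟨Nat.find hex, (Nat.find_le (h := hex) hlast).trans_lt (Nat.sub_lt hq one_pos), ?_,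
    Nat.find_spec hex⟩
  rcases h : Nat.find hex with _ | i
  · simp [landmark]
  · have := Nat.find_min hex (show i < Nat.find hex by omega)
    omega

theorem eq_of_chebDist_eq_of_opposite {x x' y c c' t t' : ℕ} (hx' : x' ≤ a)
    (hc : c = 0 ∧ c' = a ∨ c = a ∧ c' = 0) (ht : t ≤ y) (ht' : y ≤ t') (hgap : t' ≤ t + a)
    (h : chebDist (x, y) (c, t) = chebDist (x', y) (c, t))
    (h' : chebDist (x, y) (c', t') = chebDist (x', y) (c', t')) : x = x' := by
  simp only [chebDist, Nat.dist] at h h'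
  omega

theorem chebDist_ne_of_add_lt {x x' y y' c t : ℕ} (hx : x ≤ a) (hc : c ≤ a)
    (ht : t ≤ y) (hy : y ≤ t + a) (hy' : t + a < y') :
    chebDist (x, y) (c, t) ≠ chebDist (x', y') (c, t) := by
  simp only [chebDist, Nat.dist]
  omega

theorem eq_of_chebDist_eq_of_same_side {x x' y y' c t t' : ℕ} (hx : x ≤ a) (hx' : x' ≤ a)
    (hc : c = 0 ∨ c = a) (ht : t ≤ y) (hy : y < y') (ht' : y' ≤ t')
    (h : chebDist (x, y) (c, t) = chebDist (x', y') (c, t))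
    (h' : chebDist (x, y) (c, t') = chebDist (x', y') (c, t')) : x = x' := by
  simp only [chebDist, Nat.dist] at h h'
  omega

theorem eq_of_chebDist_eq_origin_of_eq_diag {x y y' : ℕ} (hx : x ≤ a)
    (h₀ : chebDist (x, y) (0, 0) = chebDist (x, y') (0, 0))
    (h₁ : chebDist (x, y) (a, a) = chebDist (x, y') (a, a)) : y = y' := by
  simp only [chebDist, Nat.dist] at h₀ h₁
  omega

theorem snd_le_of_forall_chebDist_landmark_eq (ha : 0 < a) (hab : a < b) {u v : ℕ × ℕ}
    (hu : u.1 ≤ a) (hv : v.1 ≤ a) (hvb : v.2 ≤ b)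
    (h : ∀ l ≤ b ⌈/⌉ a, chebDist u (landmark a b l) = chebDist v (landmark a b l)) :
    v.2 ≤ u.2 := by
  obtain ⟨x, y⟩ := u
  obtain ⟨x', y'⟩ := v
  dsimp only at hu hv hvb ⊢
  by_contra! hlt
  have hq : 2 ≤ b ⌈/⌉ a := not_lt.1 fun h => by
    have := (ceilDiv_le_iff_le_mul ha).1 (Nat.lt_succ_iff.1 h)
    omega
  obtain ⟨i, hi, hti, hti'⟩ := exists_landmark_snd_le_le ha (by omega) (by omega : y ≤ b)
  have hx : x = x' := by
    by_cases hfar : (landmark a b i).2 + a < y'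
    · have hya : y ≤ (landmark a b i).2 + a :=
        hti'.trans (landmark_snd_succ i ▸ min_le_left _ _)
      exact absurd (h i hi.le) (chebDist_ne_of_add_lt hu (landmark_fst_le b i) hti hya hfar)
    have hy' : y' ≤ (landmark a b (i + 1)).2 := by
      rw [landmark_snd_succ]
      omega
    have h₂ : chebDist (x, y) ((landmark a b (i - 1)).1, (landmark a b (i - 1 + 2)).2) =
        chebDist (x', y') ((landmark a b (i - 1)).1, (landmark a b (i - 1 + 2)).2) := by
      rw [← landmark_fst_add_two]
      exact h _ (by omega)
    exact eq_of_chebDist_eq_of_same_side hu hv (landmark_fst_eq_zero_or_eq b _)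
      ((landmark_snd_mono (by omega)).trans hti) hlt
      (hy'.trans (landmark_snd_mono (by omega))) (h (i - 1) (by omega)) h₂
  subst hx
  have h₀ := h 0 (by omega)
  have h₁ := h 1 (by omega)
  rw [landmark_zero] at h₀
  rw [landmark_one hab.le] at h₁
  exact hlt.ne (eq_of_chebDist_eq_origin_of_eq_diag hu h₀ h₁)

theorem eq_of_forall_chebDist_landmark_eq (ha : 0 < a) (hab : a < b) {u v : ℕ × ℕ}
    (hu : u.1 ≤ a ∧ u.2 ≤ b) (hv : v.1 ≤ a ∧ v.2 ≤ b)
    (h : ∀ l ≤ b ⌈/⌉ a, chebDist u (landmark a b l) = chebDist v (landmark a b l)) : u = v := by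
  have hy : u.2 = v.2 :=
    le_antisymm
      (snd_le_of_forall_chebDist_landmark_eq ha hab hv.1 hu.1 hu.2 fun l hl => (h l hl).symm)
      (snd_le_of_forall_chebDist_landmark_eq ha hab hu.1 hv.1 hv.2 h)
  obtain ⟨i, hi, hti, hti'⟩ := exists_landmark_snd_le_le ha (by omega) hu.2
  obtain ⟨x, y⟩ := u
  obtain ⟨x', y'⟩ := v
  dsimp only at hy hu hv hti hti'
  subst hy
  exact Prod.ext (eq_of_chebDist_eq_of_opposite hv.1 (landmark_fst_cases b i) hti hti'
    (landmark_snd_succ i ▸ min_le_left _ _) (h i hi.le) (h (i + 1) hi)) rfl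

def landmarkSet (m n : ℕ) : Set (Fin m × Fin n) :=
  Prod.map Fin.val Fin.val ⁻¹' ((range ((n - 1) ⌈/⌉ (m - 1) + 1)).image (landmark (m - 1) (n - 1)))

theorem ncard_landmarkSet_le (m n : ℕ) :
    (landmarkSet m n).ncard ≤ (n - 1) ⌈/⌉ (m - 1) + 1 :=
  calc (landmarkSet m n).ncard
      ≤ (((range ((n - 1) ⌈/⌉ (m - 1) + 1)).image (landmark (m - 1) (n - 1)) : Finset _) :
          Set (ℕ × ℕ)).ncard :=
        Set.ncard_le_ncard_of_injOn _ (fun _ h => h)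
          (Fin.val_injective.prodMap Fin.val_injective).injOn
    _ ≤ _ := by
        rw [Set.ncard_coe_finset]
        exact card_image_le.trans (card_range _).le

theorem isMetricGen_landmarkSet {m n : ℕ} (hm : 2 ≤ m) (hmn : m < n) :
    IsMetricGen (strongProd (pathGraph m) (pathGraph n)) (landmarkSet m n) := by
  have hbound (w : Fin m × Fin n) :
      (Prod.map Fin.val Fin.val w).1 ≤ m - 1 ∧ (Prod.map Fin.val Fin.val w).2 ≤ n - 1 :=
    ⟨Nat.le_sub_one_of_lt w.1.isLt, Nat.le_sub_one_of_lt w.2.isLt⟩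
  intro u v huv
  by_contra! hsame
  have hprofile : ∀ l ≤ (n - 1) ⌈/⌉ (m - 1),
      chebDist (Prod.map Fin.val Fin.val u) (landmark (m - 1) (n - 1) l) =
        chebDist (Prod.map Fin.val Fin.val v) (landmark (m - 1) (n - 1) l) := by
    intro l hl
    have h₁ := landmark_fst_le (a := m - 1) (n - 1) l
    have h₂ := landmark_snd_le (m - 1) (b := n - 1) l
    have hz := hsame (⟨(landmark (m - 1) (n - 1) l).1, by omega⟩,
      ⟨(landmark (m - 1) (n - 1) l).2, by omega⟩)
      (by simp only [landmarkSet, Set.mem_preimage, coe_image, coe_range, Set.mem_image,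
            Set.mem_Iio]
          exact ⟨l, by omega, rfl⟩)
    simpa [strongProd_pathGraph_dist] using hz
  exact huv (Fin.val_injective.prodMap Fin.val_injective
    (eq_of_forall_chebDist_landmark_eq (by omega) (by omega) (hbound u) (hbound v) hprofile))

end UpperBound

theorem stmt_17 (n1 n2 : ℕ) (h1 : 2 ≤ n1) (h2 : n1 < n2) :
    (n1 + n2 - 2) / (n1 - 1) ≤
        metricDim (strongProd (SimpleGraph.pathGraph n1) (SimpleGraph.pathGraph n2)) ∧
      metricDim (strongProd (SimpleGraph.pathGraph n1) (SimpleGraph.pathGraph n2)) ≤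
        (n1 + n2 - 2 + (n1 - 2)) / (n1 - 1) := by
  have hgen := isMetricGen_landmarkSet h1 h2
  constructor
  · refine le_metricDim ⟨_, hgen⟩ fun S hS => ?_
    have := le_mul_ncard_of_isMetricGen h1 hS
    rw [Nat.div_le_iff_le_mul_add_pred (by omega)]
    omega
  · calc metricDim _ ≤ (landmarkSet n1 n2).ncard := metricDim_le_ncard hgen
      _ ≤ (n2 - 1) ⌈/⌉ (n1 - 1) + 1 := ncard_landmarkSet_le n1 n2
      _ = _ := by
        rw [Nat.ceilDiv_eq_add_pred_div, ← Nat.add_div_right _ (by omega : 0 < n1 - 1)]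
        congr 1
        omega
end
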